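/- Let S be a subset of nodes of a weighted directed graph such that the induced subgraph G[S] has no directed spanning tree, and no node of S has incoming edges from V \ S. Then there exist two nonempty disjoint subsets S₁, S₂ ⊆ S, neither of which has incoming edges from outside itself (within the whole graph G), so that under ẋ = -Lx the steady-state values of S₁ and S₂ are determined independently of each other; in particular S is not a set of nodes that converge to a common value for all positive edge weights and all initial conditions. -/

import Mathlib

/-!
Pick `i₀ ∈ S` whose set of ancestors inside `S` is inclusion-minimal: then `i₀` reaches every
one of its ancestors. Since `G[S]` has no spanning tree, some `k ∈ S` is not reached from `i₀`,
and the ancestor sets `S₁` of `i₀` and `S₂` of `k` are disjoint. Both receive no edges from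
outside, because `S` does not. With unit weights and `x(t) = exp (-t L) x₀`, `x₀` the indicator
of `S₁`, every `Lⁿ x₀` (`n ≥ 1`) vanishes on each of these sets, as `x₀` is constant on them;
so `x` stays at `1` on `S₁` and at `0` on `S₂`.
-/

open Filter Topology

/-- `S` converges to a common value for every choice of positive edge weights on
the edges of `E` (edge (j,i) gets weight `A i j > 0`, non-edges weight `0`) and
every solution of `ẋᵢ = Σⱼ aᵢⱼ (xⱼ - xᵢ)` (every initial condition). -/
def ConvergesTogether {V : Type*} [Fintype V] (E : V → V → Prop) (S : Set V) : Prop :=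
  ∀ A : Matrix V V ℝ,
    (∀ i j, E j i → 0 < A i j) → (∀ i j, ¬ E j i → A i j = 0) →
    ∀ x : ℝ → V → ℝ,
      (∀ (i : V) (t : ℝ),
        HasDerivAt (fun s => x s i) (∑ j, A i j * (x t j - x t i)) t) →
      ∃ c : ℝ, ∀ i ∈ S, Tendsto (fun t => x t i) atTop (𝓝 c)

open NormedSpace

section

variable {V : Type*}

def NoIncomingEdges (E : V → V → Prop) (T : Set V) : Prop :=
  ∀ i ∈ T, ∀ j ∉ T, ¬ E j i

section Ancestors

variable (E : V → V → Prop) (S : Set V)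

def ancestorsIn (i : V) : Set V :=
  {j | j ∈ S ∧ Relation.ReflTransGen (fun a b => a ∈ S ∧ b ∈ S ∧ E a b) j i}

variable {E S}

lemma ancestorsIn_subset (i : V) : ancestorsIn E S i ⊆ S := fun _ hj => hj.1

lemma mem_ancestorsIn_self {i : V} (hi : i ∈ S) : i ∈ ancestorsIn E S i := ⟨hi, .refl⟩

lemma ancestorsIn_subset_of_mem {i j : V} (hj : j ∈ ancestorsIn E S i) :
    ancestorsIn E S j ⊆ ancestorsIn E S i :=
  fun _ hk => ⟨hk.1, hk.2.trans hj.2⟩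

lemma noIncomingEdges_ancestorsIn (hS : NoIncomingEdges E S) (i : V) :
    NoIncomingEdges E (ancestorsIn E S i) := by
  intro a ha b hb hba
  by_cases hbS : b ∈ S
  · exact hb ⟨hbS, (Relation.ReflTransGen.single ⟨hbS, ha.1, hba⟩).trans ha.2⟩
  · exact hS a ha.1 b hbS hba

lemma NoIncomingEdges.exists_disjoint_of_not_exists_root (hS : NoIncomingEdges E S)
    (hfin : S.Finite) (hne : S.Nonempty)
    (hroot : ¬ ∃ r ∈ S, ∀ j ∈ S,
      Relation.ReflTransGen (fun a b => a ∈ S ∧ b ∈ S ∧ E a b) r j) :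
    ∃ S₁ S₂ : Set V, S₁ ⊆ S ∧ S₂ ⊆ S ∧ S₁.Nonempty ∧ S₂.Nonempty ∧ Disjoint S₁ S₂ ∧
      NoIncomingEdges E S₁ ∧ NoIncomingEdges E S₂ := by
  obtain ⟨i₀, hi₀, hmin⟩ := hfin.exists_minimalFor (ancestorsIn E S) S hne
  push Not at hroot
  obtain ⟨k, hk, hunreach⟩ := hroot i₀ hi₀
  refine ⟨_, _, ancestorsIn_subset i₀, ancestorsIn_subset k, ⟨i₀, mem_ancestorsIn_self hi₀⟩,
    ⟨k, mem_ancestorsIn_self hk⟩, Set.disjoint_left.2 fun m hm₀ hmk => ?_,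
    noIncomingEdges_ancestorsIn hS i₀, noIncomingEdges_ancestorsIn hS k⟩
  have hi₀m : i₀ ∈ ancestorsIn E S m :=
    hmin hm₀.1 (ancestorsIn_subset_of_mem hm₀) (mem_ancestorsIn_self hi₀)
  exact hunreach (hi₀m.2.trans hmk.2)

end Ancestors

section Consensus

variable [Fintype V]

noncomputable def negLaplacian (A : Matrix V V ℝ) : (V → ℝ) →L[ℝ] (V → ℝ) :=
  LinearMap.toContinuousLinearMap
    { toFun := fun v i => ∑ j, A i j * (v j - v i)
      map_add' := fun v w => by
        ext i
        simp only [Pi.add_apply, ← Finset.sum_add_distrib]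
        exact Finset.sum_congr rfl fun j _ => by ring
      map_smul' := fun c v => by
        ext i
        simp only [Pi.smul_apply, smul_eq_mul, RingHom.id_apply, Finset.mul_sum]
        exact Finset.sum_congr rfl fun j _ => by ring }

variable {E : V → V → Prop} {A : Matrix V V ℝ} {T : Set V} {v : V → ℝ} {a : ℝ}

lemma negLaplacian_apply_eq_zero (hA : ∀ i j, ¬ E j i → A i j = 0)
    (hT : NoIncomingEdges E T) (hv : ∀ j ∈ T, v j = a) {i : V} (hi : i ∈ T) :
    negLaplacian A v i = 0 := by
  refine Finset.sum_eq_zero fun j _ => ?_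
  by_cases hj : j ∈ T
  · rw [hv j hj, hv i hi, sub_self, mul_zero]
  · rw [hA i j (hT i hi j hj), zero_mul]

lemma negLaplacian_pow_succ_apply_eq_zero (hA : ∀ i j, ¬ E j i → A i j = 0)
    (hT : NoIncomingEdges E T) (hv : ∀ j ∈ T, v j = a) (n : ℕ) {i : V} (hi : i ∈ T) :
    (negLaplacian A ^ (n + 1)) v i = 0 := by
  induction n generalizing i with
  | zero => simpa only [zero_add, pow_one] using negLaplacian_apply_eq_zero hA hT hv hi
  | succ n ih =>
    rw [pow_succ', mul_apply_eq_comp]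
    exact negLaplacian_apply_eq_zero hA hT (fun j hj => ih hj) hi

lemma exp_smul_negLaplacian_apply (hA : ∀ i j, ¬ E j i → A i j = 0)
    (hT : NoIncomingEdges E T) (hv : ∀ j ∈ T, v j = a) (t : ℝ) {i : V} (hi : i ∈ T) :
    exp (t • negLaplacian A) v i = a := by
  let φ := (ContinuousLinearMap.proj i).comp (ContinuousLinearMap.apply ℝ (V → ℝ) v)
  change φ (exp (t • negLaplacian A)) = a
  rw [exp_eq_tsum ℝ, φ.map_tsum (expSeries_summable' _), tsum_eq_single 0]
  · simpa [φ] using hv i hi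
  · intro n hn
    obtain ⟨m, rfl⟩ := Nat.exists_eq_succ_of_ne_zero hn
    rw [smul_pow, map_smul, map_smul]
    change _ • _ • (negLaplacian A ^ (m + 1)) v i = 0
    rw [negLaplacian_pow_succ_apply_eq_zero hA hT hv m hi, smul_zero, smul_zero]

lemma hasDerivAt_exp_smul_negLaplacian_apply (A : Matrix V V ℝ) (v : V → ℝ) (i : V) (t : ℝ) :
    HasDerivAt (fun s => exp (s • negLaplacian A) v i)
      (∑ j, A i j * (exp (t • negLaplacian A) v j - exp (t • negLaplacian A) v i)) t := by
  let φ := (ContinuousLinearMap.proj i).comp (ContinuousLinearMap.apply ℝ (V → ℝ) v)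
  exact φ.hasFDerivAt.comp_hasDerivAt t (hasDerivAt_exp_smul_const' (negLaplacian A) t)

lemma not_convergesTogether_of_disjoint {S S₁ S₂ : Set V}
    (h₁ : S₁ ⊆ S) (h₂ : S₂ ⊆ S) (hne₁ : S₁.Nonempty) (hne₂ : S₂.Nonempty)
    (hd : Disjoint S₁ S₂) (hc₁ : NoIncomingEdges E S₁) (hc₂ : NoIncomingEdges E S₂) :
    ¬ ConvergesTogether E S := by
  classical
  intro hconv
  let A : Matrix V V ℝ := Matrix.of fun i j => if E j i then 1 else 0
  have hA : ∀ i j, ¬ E j i → A i j = 0 := fun i j h => if_neg h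
  let v : V → ℝ := S₁.indicator 1
  have hv₁ : ∀ i ∈ S₁, v i = 1 := fun i hi => Set.indicator_of_mem hi 1
  have hv₂ : ∀ i ∈ S₂, v i = 0 := fun i hi =>
    Set.indicator_of_notMem (hd.notMem_of_mem_right hi) 1
  obtain ⟨c, hc⟩ := hconv A (fun i j h => by simp [A, h]) hA
    (fun t => exp (t • negLaplacian A) v) (hasDerivAt_exp_smul_negLaplacian_apply A v)
  have hlimit : ∀ T a, NoIncomingEdges E T → (∀ j ∈ T, v j = a) →
      ∀ i ∈ T, i ∈ S → a = c := fun T a hT hvT i hi hiS => by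
    have hlim := hc i hiS
    rw [funext fun t => exp_smul_negLaplacian_apply hA hT hvT t hi] at hlim
    exact tendsto_const_nhds_iff.1 hlim
  obtain ⟨i₁, hi₁⟩ := hne₁
  obtain ⟨i₂, hi₂⟩ := hne₂
  exact one_ne_zero <|
    (hlimit S₁ 1 hc₁ hv₁ i₁ hi₁ (h₁ hi₁)).trans (hlimit S₂ 0 hc₂ hv₂ i₂ hi₂ (h₂ hi₂)).symm

end Consensus

end

/-- If the induced subgraph on a nonempty `S` has no directed spanning tree and no
node of `S` has incoming edges from outside `S`, then there are two nonempty
disjoint subsets `S₁, S₂ ⊆ S`, neither receiving edges from outside itself, whose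
steady states are determined independently; in particular the nodes of `S` do not
converge to a common value for all positive weights and initial conditions. -/
theorem stmt11 {V : Type*} [Fintype V] (E : V → V → Prop) (S : Set V)
    (hS : S.Nonempty)
    (hclosed : ∀ i ∈ S, ∀ j ∉ S, ¬ E j i)
    (hnotree : ¬ ∃ r ∈ S, ∀ j ∈ S,
      Relation.ReflTransGen (fun a b => a ∈ S ∧ b ∈ S ∧ E a b) r j) :
    ∃ S₁ S₂ : Set V, S₁ ⊆ S ∧ S₂ ⊆ S ∧ S₁.Nonempty ∧ S₂.Nonempty ∧
      Disjoint S₁ S₂ ∧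
      (∀ i ∈ S₁, ∀ j ∉ S₁, ¬ E j i) ∧
      (∀ i ∈ S₂, ∀ j ∉ S₂, ¬ E j i) ∧
      ¬ ConvergesTogether E S := by
  obtain ⟨S₁, S₂, h₁, h₂, hne₁, hne₂, hd, hc₁, hc₂⟩ :=
    NoIncomingEdges.exists_disjoint_of_not_exists_root hclosed S.toFinite hS hnotree
  exact ⟨S₁, S₂, h₁, h₂, hne₁, hne₂, hd, hc₁, hc₂,
    not_convergesTogether_of_disjoint h₁ h₂ hne₁ hne₂ hd hc₁ hc₂⟩
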